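/- Any additive map $f$ from effects on $\mathbb{C}^d$ to $[0,1]$ (i.e. $f(E_1 + E_2) = f(E_1) + f(E_2)$ whenever $E_1, E_2$ and $E_1+E_2$ are all effects, and $f(I)=1$) extends uniquely to a positive linear functional on Hermitian matrices, and hence $f(E) = \mathrm{Tr}[\rho E]$ for a unique density matrix $\rho$. -/

import Mathlib

open Matrix BigOperators ComplexOrder

/-- An effect on `ℂ^d`: a Hermitian matrix `E` with `0 ≤ E ≤ I`. -/
def IsEffect {d : ℕ} (E : Matrix (Fin d) (Fin d) ℂ) : Prop :=
  E.IsHermitian ∧ E.PosSemidef ∧ ((1 : Matrix (Fin d) (Fin d) ℂ) - E).PosSemidef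

namespace EffectAux



variable {d : ℕ}

lemma psd_smul {A : Matrix (Fin d) (Fin d) ℂ} (hA : A.PosSemidef) {c : ℝ} (hc : 0 ≤ c) :
    (c • A).PosSemidef := by
  refine Matrix.PosSemidef.of_dotProduct_mulVec_nonneg ?_ fun x => ?_
  · show (c • A)ᴴ = c • A
    rw [conjTranspose_smul, star_trivial, hA.1]
  · rw [smul_mulVec, dotProduct_smul, Complex.real_smul]
    exact mul_nonneg (by exact_mod_cast hc) (hA.dotProduct_mulVec_nonneg x)

lemma conj_key {A : Matrix (Fin d) (Fin d) ℂ} (hA : A.IsHermitian) (c : ℝ) :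
    c • (1 : Matrix (Fin d) (Fin d) ℂ) - A
      = (hA.eigenvectorUnitary : Matrix (Fin d) (Fin d) ℂ) *
        diagonal (fun i => ((c - hA.eigenvalues i : ℝ) : ℂ)) *
        (hA.eigenvectorUnitary : Matrix (Fin d) (Fin d) ℂ)ᴴ := by
  set U : Matrix (Fin d) (Fin d) ℂ := (hA.eigenvectorUnitary : Matrix (Fin d) (Fin d) ℂ) with hU
  have hUU : U * Uᴴ = 1 := by
    simpa [star_eq_conjTranspose] using (Matrix.mem_unitaryGroup_iff.mp hA.eigenvectorUnitary.2)
  have hdiag : diagonal (fun i => ((c - hA.eigenvalues i : ℝ) : ℂ))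
      = (c:ℂ) • 1 - diagonal (RCLike.ofReal ∘ hA.eigenvalues) := by
    rw [smul_one_eq_diagonal, diagonal_sub]
    funext i; simp
  have hsmul : (c:ℂ) • (1 : Matrix (Fin d) (Fin d) ℂ) = c • 1 := by
    ext i j; simp [Complex.real_smul]
  rw [hdiag, Matrix.mul_sub, Matrix.sub_mul, mul_smul_comm, smul_mul_assoc, Matrix.mul_one,
    hUU, hsmul]
  congr 1
  conv_lhs => rw [hA.spectral_theorem]
  rw [Unitary.conjStarAlgAut_apply, star_eq_conjTranspose]

lemma exists_upper {A : Matrix (Fin d) (Fin d) ℂ} (hA : A.IsHermitian) :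
    ∃ c : ℝ, 0 < c ∧ (c • (1 : Matrix (Fin d) (Fin d) ℂ) - A).PosSemidef := by
  classical
  refine ⟨1 + ∑ i, |hA.eigenvalues i|, by positivity, ?_⟩
  rw [conj_key hA]
  refine Matrix.PosSemidef.mul_mul_conjTranspose_same ?_ _
  refine Matrix.PosSemidef.diagonal ?_
  intro i
  simp only [Pi.zero_apply]
  rw [Complex.zero_le_real]
  have h1 : hA.eigenvalues i ≤ ∑ j, |hA.eigenvalues j| :=
    (le_abs_self _).trans (Finset.single_le_sum (f := fun j => |hA.eigenvalues j|)
      (fun j _ => abs_nonneg _) (Finset.mem_univ i))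
  linarith

lemma exists_bound {A : Matrix (Fin d) (Fin d) ℂ} (hA : A.IsHermitian) :
    ∃ c : ℝ, 0 < c ∧ (c • (1 : Matrix (Fin d) (Fin d) ℂ) - A).PosSemidef ∧
      (A + c • (1 : Matrix (Fin d) (Fin d) ℂ)).PosSemidef := by
  obtain ⟨c₁, hc₁, h₁⟩ := exists_upper hA
  obtain ⟨c₂, hc₂, h₂⟩ := exists_upper (A := -A) (by simpa using hA.neg)
  refine ⟨c₁ + c₂, by linarith, ?_, ?_⟩
  · have : (c₁ + c₂) • (1 : Matrix (Fin d) (Fin d) ℂ) - A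
        = (c₁ • (1 : Matrix (Fin d) (Fin d) ℂ) - A) + c₂ • 1 := by
      rw [add_smul]; abel
    rw [this]
    exact h₁.add (psd_smul Matrix.PosSemidef.one hc₂.le)
  · have : A + (c₁ + c₂) • (1 : Matrix (Fin d) (Fin d) ℂ)
        = (c₂ • (1 : Matrix (Fin d) (Fin d) ℂ) - (-A)) + c₁ • 1 := by
      rw [add_smul]; abel
    rw [this]
    exact h₂.add (psd_smul Matrix.PosSemidef.one hc₁.le)

/-- A canonical positive bound for a matrix. -/
noncomputable def bnd (A : Matrix (Fin d) (Fin d) ℂ) : ℝ :=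
  if h : A.IsHermitian then (exists_bound h).choose else 1

lemma bnd_pos (A : Matrix (Fin d) (Fin d) ℂ) : 0 < bnd A := by
  unfold bnd
  split
  · exact (exists_bound ‹_›).choose_spec.1
  · norm_num

lemma bnd_sub_psd {A : Matrix (Fin d) (Fin d) ℂ} (hA : A.IsHermitian) :
    (bnd A • (1 : Matrix (Fin d) (Fin d) ℂ) - A).PosSemidef := by
  unfold bnd
  rw [dif_pos hA]
  exact (exists_bound hA).choose_spec.2.1

lemma bnd_add_psd {A : Matrix (Fin d) (Fin d) ℂ} (hA : A.IsHermitian) :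
    (A + bnd A • (1 : Matrix (Fin d) (Fin d) ℂ)).PosSemidef := by
  unfold bnd
  rw [dif_pos hA]
  exact (exists_bound hA).choose_spec.2.2

lemma isEffect_zero : IsEffect (0 : Matrix (Fin d) (Fin d) ℂ) :=
  ⟨Matrix.isHermitian_zero, Matrix.PosSemidef.zero, by simpa using Matrix.PosSemidef.one⟩

lemma isEffect_one : IsEffect (1 : Matrix (Fin d) (Fin d) ℂ) :=
  ⟨Matrix.isHermitian_one, Matrix.PosSemidef.one, by simpa using Matrix.PosSemidef.zero⟩

lemma effect_smul {E : Matrix (Fin d) (Fin d) ℂ} (hE : IsEffect E) {t : ℝ}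
    (h0 : 0 ≤ t) (h1 : t ≤ 1) : IsEffect (t • E) := by
  have hpsd := psd_smul hE.2.1 h0
  refine ⟨hpsd.isHermitian, hpsd, ?_⟩
  have key : (1 : Matrix (Fin d) (Fin d) ℂ) - t • E = (1 - E) + (1 - t) • E := by
    rw [sub_smul, one_smul]; abel
  rw [key]
  exact hE.2.2.add (psd_smul hE.2.1 (by linarith))

lemma isEffect_sub {E F : Matrix (Fin d) (Fin d) ℂ} (hE : IsEffect E) (hF : IsEffect F)
    (h : (F - E).PosSemidef) : IsEffect (F - E) := by
  refine ⟨h.isHermitian, h, ?_⟩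
  have key : (1 : Matrix (Fin d) (Fin d) ℂ) - (F - E) = (1 - F) + E := by abel
  rw [key]
  exact hF.2.2.add hE.2.1

lemma psd_scale_isEffect {A : Matrix (Fin d) (Fin d) ℂ} (hA : A.PosSemidef) {c : ℝ}
    (hc : 0 < c) (h : (c • (1 : Matrix (Fin d) (Fin d) ℂ) - A).PosSemidef) :
    IsEffect (c⁻¹ • A) := by
  have hpsd := psd_smul hA (by positivity : (0:ℝ) ≤ c⁻¹)
  refine ⟨hpsd.isHermitian, hpsd, ?_⟩
  have key : (1 : Matrix (Fin d) (Fin d) ℂ) - c⁻¹ • A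
      = c⁻¹ • (c • (1 : Matrix (Fin d) (Fin d) ℂ) - A) := by
    rw [smul_sub, smul_smul, inv_mul_cancel₀ hc.ne', one_smul]
  rw [key]
  exact psd_smul h (by positivity)


section FPart

variable {d : ℕ} {f : Matrix (Fin d) (Fin d) ℂ → ℝ}
variable (hrange : ∀ E, IsEffect E → 0 ≤ f E ∧ f E ≤ 1)
variable (hadd : ∀ E₁ E₂, IsEffect E₁ → IsEffect E₂ → IsEffect (E₁ + E₂) →
      f (E₁ + E₂) = f E₁ + f E₂)

include hadd in
lemma f_zero : f 0 = 0 := by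
  have := hadd 0 0 isEffect_zero isEffect_zero (by simpa using isEffect_zero)
  simp only [add_zero] at this
  linarith

include hrange hadd in
lemma f_mono {E F : Matrix (Fin d) (Fin d) ℂ} (hE : IsEffect E) (hF : IsEffect F)
    (h : (F - E).PosSemidef) : f E ≤ f F := by
  have heff := isEffect_sub hE hF h
  have := hadd E (F - E) hE heff (by simpa using hF)
  simp only [add_sub_cancel] at this
  have h0 := (hrange _ heff).1
  linarith

include hrange hadd in
lemma f_nat {E : Matrix (Fin d) (Fin d) ℂ} (hE : IsEffect E) :
    ∀ n : ℕ, ∀ t : ℝ, 0 ≤ t → (n : ℝ) * t ≤ 1 → f (((n : ℝ) * t) • E) = n * f (t • E) := by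
  intro n
  induction n with
  | zero => intro t _ _; simpa using f_zero hadd
  | succ n ih =>
    intro t ht hle
    have htn : (n : ℝ) * t ≤ 1 := by
      have : (n : ℝ) * t ≤ (n + 1 : ℝ) * t := by nlinarith
      push_cast at hle ⊢; linarith
    have ht1 : t ≤ 1 := by
      have : (1 : ℝ) * t ≤ ((n : ℝ) + 1) * t := by nlinarith
      push_cast at hle; linarith
    have hnt0 : 0 ≤ (n : ℝ) * t := by positivity
    have e₁ : IsEffect (((n : ℝ) * t) • E) := effect_smul hE hnt0 htn
    have e₂ : IsEffect (t • E) := effect_smul hE ht ht1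
    have esum : (((n : ℝ) + 1) * t) • E = ((n : ℝ) * t) • E + t • E := by
      rw [← add_smul]; ring_nf
    have e₃ : IsEffect ((((n : ℝ) + 1) * t) • E) := by
      refine effect_smul hE (by positivity) ?_
      push_cast at hle; linarith
    push_cast
    rw [esum] at e₃ ⊢
    rw [hadd _ _ e₁ e₂ e₃, ih t ht htn]
    ring

include hrange hadd in
lemma f_rat {E : Matrix (Fin d) (Fin d) ℂ} (hE : IsEffect E) {q : ℚ}
    (h0 : 0 ≤ q) (h1 : q ≤ 1) : f ((q : ℝ) • E) = (q : ℝ) * f E := by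
  set n : ℕ := q.den with hn
  set m : ℕ := q.num.toNat with hm
  have hden : (0:ℝ) < (n:ℝ) := by positivity
  have hnum : ((m:ℕ):ℝ) = ((q.num : ℤ) : ℝ) := by
    rw [hm]; exact_mod_cast Int.toNat_of_nonneg (Rat.num_nonneg.mpr h0)
  have hq : (q : ℝ) = (m : ℝ) / (n : ℝ) := by
    rw [hnum, hn, Rat.cast_def]
  have hmn : (m : ℝ) ≤ (n : ℝ) := by
    have : (q:ℝ) ≤ 1 := by exact_mod_cast h1
    rw [hq] at this
    calc (m:ℝ) = ((m:ℝ)/(n:ℝ)) * n := by field_simp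
    _ ≤ 1 * n := by nlinarith
    _ = n := by ring
  have hinv0 : (0:ℝ) ≤ 1 / (n:ℝ) := by positivity
  have h1n : (n : ℝ) * (1 / (n:ℝ)) ≤ 1 := by field_simp; exact le_rfl
  have hfull : f E = (n : ℝ) * f ((1/(n:ℝ)) • E) := by
    have := f_nat hrange hadd hE n (1/(n:ℝ)) hinv0 h1n
    rw [show (n:ℝ) * (1/(n:ℝ)) = 1 by field_simp, one_smul] at this
    exact this
  have hpart : f (((m:ℝ) * (1/(n:ℝ))) • E) = (m:ℝ) * f ((1/(n:ℝ)) • E) := by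
    refine f_nat hrange hadd hE m (1/(n:ℝ)) hinv0 ?_
    calc (m:ℝ) * (1/(n:ℝ)) ≤ (n:ℝ) * (1/(n:ℝ)) := by
          apply mul_le_mul_of_nonneg_right hmn hinv0
    _ ≤ 1 := h1n
  rw [hq, show (m:ℝ)/(n:ℝ) = (m:ℝ) * (1/(n:ℝ)) by ring, hpart, hfull]
  field_simp

include hrange hadd in
lemma f_smul {E : Matrix (Fin d) (Fin d) ℂ} (hE : IsEffect E) {t : ℝ}
    (h0 : 0 ≤ t) (h1 : t ≤ 1) : f (t • E) = t * f E := by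
  have hfE0 : 0 ≤ f E := (hrange E hE).1
  -- lower and upper rational bounds
  have lower : ∀ q : ℚ, 0 ≤ q → (q:ℝ) ≤ t → (q:ℝ) * f E ≤ f (t • E) := by
    intro q hq0 hqt
    have hq1 : q ≤ 1 := by
      have : (q:ℝ) ≤ 1 := le_trans hqt h1
      exact_mod_cast this
    rw [← f_rat hrange hadd hE hq0 hq1]
    refine f_mono hrange hadd (effect_smul hE (by exact_mod_cast hq0) (by exact_mod_cast hq1))
      (effect_smul hE h0 h1) ?_
    have : t • E - (q:ℝ) • E = (t - (q:ℝ)) • E := by rw [sub_smul]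
    rw [this]
    exact psd_smul hE.2.1 (by linarith)
  have upper : ∀ q : ℚ, (t ≤ (q:ℝ)) → (q:ℝ) ≤ 1 → f (t • E) ≤ (q:ℝ) * f E := by
    intro q hqt hq1
    have hq0 : (0:ℚ) ≤ q := by
      have : (0:ℝ) ≤ (q:ℝ) := le_trans h0 hqt
      exact_mod_cast this
    rw [← f_rat hrange hadd hE hq0 (by exact_mod_cast hq1)]
    refine f_mono hrange hadd (effect_smul hE h0 h1)
      (effect_smul hE (by exact_mod_cast hq0) (by exact_mod_cast hq1)) ?_
    have : (q:ℝ) • E - t • E = ((q:ℝ) - t) • E := by rw [sub_smul]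
    rw [this]
    exact psd_smul hE.2.1 (by linarith)
  by_contra hne
  rcases lt_or_gt_of_ne hne with hlt | hgt
  · -- f (t•E) < t * f E : use lower bound
    have hb : 0 < f E := by
      rcases hfE0.lt_or_eq with h | h
      · exact h
      · exfalso
        have h₀ := (hrange _ (effect_smul hE h0 h1)).1
        rw [← h] at hlt
        nlinarith [hlt, h₀]
    have hratio : f (t • E) / f E < t := by
      rw [div_lt_iff₀ hb]; linarith [hlt]
    have hr0 : 0 ≤ f (t • E) / f E := div_nonneg (hrange _ (effect_smul hE h0 h1)).1 hb.le
    obtain ⟨q, hq1, hq2⟩ := exists_rat_btwn hratio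
    have hq0 : (0:ℚ) ≤ q := by
      have : (0:ℝ) ≤ (q:ℝ) := le_trans hr0 hq1.le
      exact_mod_cast this
    have hc : f (t • E) / f E * f E = f (t • E) := div_mul_cancel₀ _ hb.ne'
    nlinarith [lower q hq0 hq2.le, hq1, hb, hc]
  · -- t * f E < f (t•E)
    have hb : 0 < f E := by
      rcases hfE0.lt_or_eq with h | h
      · exact h
      · exfalso
        have hle := upper 1 (by exact_mod_cast h1) (by norm_num)
        rw [← h] at hgt hle
        push_cast at hle
        nlinarith [hle, hgt]
    have hratio : t < f (t • E) / f E := by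
      rw [lt_div_iff₀ hb]; linarith [hgt]
    obtain ⟨q, hq1, hq2⟩ := exists_rat_btwn hratio
    have hup : f (t•E) ≤ f E := by
      refine f_mono hrange hadd (effect_smul hE h0 h1) hE ?_
      have : E - t • E = (1 - t) • E := by rw [sub_smul, one_smul]
      rw [this]
      exact psd_smul hE.2.1 (by linarith)
    have hq1' : (q:ℝ) ≤ 1 := by
      have : f (t • E) / f E ≤ 1 := by
        rw [div_le_one hb]; exact hup
      linarith [hq2.le]
    have hc : f (t • E) / f E * f E = f (t • E) := div_mul_cancel₀ _ hb.ne'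
    nlinarith [upper q hq1.le hq1', hq2, hb, hc]

end FPart

lemma herm_smul_real {d : ℕ} {A : Matrix (Fin d) (Fin d) ℂ} (hA : A.IsHermitian) (t : ℝ) :
    (t • A).IsHermitian := by
  show (t • A)ᴴ = t • A
  rw [conjTranspose_smul, star_trivial, hA]

section GPart

variable {d : ℕ} {f : Matrix (Fin d) (Fin d) ℂ → ℝ}
variable (hrange : ∀ E, IsEffect E → 0 ≤ f E ∧ f E ≤ 1)
variable (hadd : ∀ E₁ E₂, IsEffect E₁ → IsEffect E₂ → IsEffect (E₁ + E₂) →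
      f (E₁ + E₂) = f E₁ + f E₂)
variable (hunit : f 1 = 1)

include hrange hadd in
/-- well-definedness of the extension to PSD matrices -/
lemma hwd_le {A : Matrix (Fin d) (Fin d) ℂ} (hA : A.PosSemidef) {c₁ c₂ : ℝ}
    (h1 : 0 < c₁) (h2 : 0 < c₂) (hle : c₁ ≤ c₂)
    (hp1 : (c₁ • (1 : Matrix (Fin d) (Fin d) ℂ) - A).PosSemidef) :
    c₁ * f (c₁⁻¹ • A) = c₂ * f (c₂⁻¹ • A) := by
  have hE : IsEffect (c₁⁻¹ • A) := psd_scale_isEffect hA h1 hp1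
  have ht0 : 0 ≤ c₁ / c₂ := by positivity
  have ht1 : c₁ / c₂ ≤ 1 := by
    rw [div_le_one h2]; exact hle
  have hkey : (c₁ / c₂) • (c₁⁻¹ • A) = c₂⁻¹ • A := by
    rw [smul_smul]
    congr 1
    field_simp
  rw [← hkey, f_smul hrange hadd hE ht0 ht1]
  field_simp

include hrange hadd in
lemma hwd {A : Matrix (Fin d) (Fin d) ℂ} (hA : A.PosSemidef) {c₁ c₂ : ℝ}
    (h1 : 0 < c₁) (h2 : 0 < c₂)
    (hp1 : (c₁ • (1 : Matrix (Fin d) (Fin d) ℂ) - A).PosSemidef)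
    (hp2 : (c₂ • (1 : Matrix (Fin d) (Fin d) ℂ) - A).PosSemidef) :
    c₁ * f (c₁⁻¹ • A) = c₂ * f (c₂⁻¹ • A) := by
  rcases le_total c₁ c₂ with h | h
  · exact hwd_le hrange hadd hA h1 h2 h hp1
  · exact (hwd_le hrange hadd hA h2 h1 h hp2).symm

end GPart

/-- The value of the extension on a PSD matrix. -/
noncomputable def hval (f : Matrix (Fin d) (Fin d) ℂ → ℝ) (A : Matrix (Fin d) (Fin d) ℂ) : ℝ :=
  bnd A * f ((bnd A)⁻¹ • A)

/-- The value of the extension on a Hermitian matrix. -/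
noncomputable def gval (f : Matrix (Fin d) (Fin d) ℂ → ℝ) (A : Matrix (Fin d) (Fin d) ℂ) : ℝ :=
  hval f (A + bnd A • 1) - bnd A

section GPart2

variable {d : ℕ} {f : Matrix (Fin d) (Fin d) ℂ → ℝ}
variable (hrange : ∀ E, IsEffect E → 0 ≤ f E ∧ f E ≤ 1)
variable (hadd : ∀ E₁ E₂, IsEffect E₁ → IsEffect E₂ → IsEffect (E₁ + E₂) →
      f (E₁ + E₂) = f E₁ + f E₂)
variable (hunit : f 1 = 1)

include hrange hadd in
lemma h_eq {A : Matrix (Fin d) (Fin d) ℂ} (hA : A.PosSemidef) {c : ℝ} (hc : 0 < c)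
    (hp : (c • (1 : Matrix (Fin d) (Fin d) ℂ) - A).PosSemidef) :
    hval f A = c * f (c⁻¹ • A) :=
  hwd hrange hadd hA (bnd_pos A) hc (bnd_sub_psd hA.isHermitian) hp

include hrange hadd in
lemma h_effect {E : Matrix (Fin d) (Fin d) ℂ} (hE : IsEffect E) : hval f E = f E := by
  rw [h_eq hrange hadd hE.2.1 one_pos (by simpa using hE.2.2)]
  simp

include hrange hadd in
lemma h_nonneg {A : Matrix (Fin d) (Fin d) ℂ} (hA : A.PosSemidef) : 0 ≤ hval f A := by
  have hE : IsEffect ((bnd A)⁻¹ • A) :=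
    psd_scale_isEffect hA (bnd_pos A) (bnd_sub_psd hA.isHermitian)
  exact mul_nonneg (bnd_pos A).le (hrange _ hE).1

include hrange hadd in
lemma h_zero : hval f 0 = 0 := by
  unfold hval
  rw [smul_zero, f_zero hadd, mul_zero]

include hrange hadd in
lemma h_add {A B : Matrix (Fin d) (Fin d) ℂ} (hA : A.PosSemidef) (hB : B.PosSemidef) :
    hval f (A + B) = hval f A + hval f B := by
  set c : ℝ := bnd A + bnd B with hc
  have hc0 : 0 < c := by have := bnd_pos A; have := bnd_pos B; positivity
  have hcA : (c • (1 : Matrix (Fin d) (Fin d) ℂ) - A).PosSemidef := by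
    have : c • (1 : Matrix (Fin d) (Fin d) ℂ) - A
        = (bnd A • (1 : Matrix (Fin d) (Fin d) ℂ) - A) + bnd B • 1 := by
      rw [hc, add_smul]; abel
    rw [this]
    exact (bnd_sub_psd hA.isHermitian).add (psd_smul Matrix.PosSemidef.one (bnd_pos B).le)
  have hcB : (c • (1 : Matrix (Fin d) (Fin d) ℂ) - B).PosSemidef := by
    have : c • (1 : Matrix (Fin d) (Fin d) ℂ) - B
        = (bnd B • (1 : Matrix (Fin d) (Fin d) ℂ) - B) + bnd A • 1 := by
      rw [hc, add_smul]; abel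
    rw [this]
    exact (bnd_sub_psd hB.isHermitian).add (psd_smul Matrix.PosSemidef.one (bnd_pos A).le)
  have hcAB : (c • (1 : Matrix (Fin d) (Fin d) ℂ) - (A + B)).PosSemidef := by
    have : c • (1 : Matrix (Fin d) (Fin d) ℂ) - (A + B)
        = (bnd A • (1 : Matrix (Fin d) (Fin d) ℂ) - A) +
          (bnd B • (1 : Matrix (Fin d) (Fin d) ℂ) - B) := by
      rw [hc, add_smul]; abel
    rw [this]
    exact (bnd_sub_psd hA.isHermitian).add (bnd_sub_psd hB.isHermitian)
  have eA : IsEffect (c⁻¹ • A) := psd_scale_isEffect hA hc0 hcA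
  have eB : IsEffect (c⁻¹ • B) := psd_scale_isEffect hB hc0 hcB
  have eAB : IsEffect (c⁻¹ • (A + B)) := psd_scale_isEffect (hA.add hB) hc0 hcAB
  rw [h_eq hrange hadd (hA.add hB) hc0 hcAB, h_eq hrange hadd hA hc0 hcA,
    h_eq hrange hadd hB hc0 hcB]
  have : c⁻¹ • (A + B) = c⁻¹ • A + c⁻¹ • B := by rw [smul_add]
  rw [this] at eAB ⊢
  rw [hadd _ _ eA eB eAB]
  ring

include hrange hadd in
lemma h_smul {A : Matrix (Fin d) (Fin d) ℂ} (hA : A.PosSemidef) {t : ℝ} (ht : 0 ≤ t) :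
    hval f (t • A) = t * hval f A := by
  rcases ht.lt_or_eq with ht0 | ht0
  · set c : ℝ := bnd A with hc
    have hc0 : 0 < c := bnd_pos A
    have htc : (0:ℝ) < t * c := by positivity
    have hp : ((t * c) • (1 : Matrix (Fin d) (Fin d) ℂ) - t • A).PosSemidef := by
      have : (t * c) • (1 : Matrix (Fin d) (Fin d) ℂ) - t • A
          = t • (c • (1 : Matrix (Fin d) (Fin d) ℂ) - A) := by
        rw [smul_sub, smul_smul]
      rw [this]
      exact psd_smul (bnd_sub_psd hA.isHermitian) ht
    rw [h_eq hrange hadd (psd_smul hA ht) htc hp, h_eq hrange hadd hA hc0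
      (bnd_sub_psd hA.isHermitian)]
    have : (t * c)⁻¹ • t • A = c⁻¹ • A := by
      rw [smul_smul]
      congr 1
      field_simp
    rw [this]
    ring
  · rw [← ht0, zero_smul, h_zero hrange hadd, zero_mul]

include hrange hadd hunit in
lemma h_smul_one {c : ℝ} (hc : 0 ≤ c) :
    hval f (c • (1 : Matrix (Fin d) (Fin d) ℂ)) = c := by
  rw [h_smul hrange hadd Matrix.PosSemidef.one hc, h_effect hrange hadd isEffect_one, hunit,
    mul_one]

include hrange hadd hunit in
lemma g_wd {A : Matrix (Fin d) (Fin d) ℂ} (hA : A.IsHermitian) {c : ℝ} (hc : 0 ≤ c)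
    (hp : (A + c • (1 : Matrix (Fin d) (Fin d) ℂ)).PosSemidef) :
    hval f (A + c • 1) = gval f A + c := by
  unfold gval
  set b : ℝ := bnd A with hb
  have hb0 : 0 < b := bnd_pos A
  have hpb : (A + b • (1 : Matrix (Fin d) (Fin d) ℂ)).PosSemidef := bnd_add_psd hA
  have key : hval f (A + c • 1) + b = hval f (A + b • 1) + c := by
    have e1 : (A + c • (1:Matrix (Fin d) (Fin d) ℂ)) + b • 1
        = (A + b • (1:Matrix (Fin d) (Fin d) ℂ)) + c • 1 := by abel
    have h1 : hval f ((A + c • (1:Matrix (Fin d) (Fin d) ℂ)) + b • 1)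
        = hval f (A + c • 1) + b := by
      rw [h_add hrange hadd hp (psd_smul Matrix.PosSemidef.one hb0.le),
        h_smul_one hrange hadd hunit hb0.le]
    have h2 : hval f ((A + b • (1:Matrix (Fin d) (Fin d) ℂ)) + c • 1)
        = hval f (A + b • 1) + c := by
      rw [h_add hrange hadd hpb (psd_smul Matrix.PosSemidef.one hc),
        h_smul_one hrange hadd hunit hc]
    rw [← h1, ← h2, e1]
  linarith [key]

include hrange hadd hunit in
lemma g_psd {A : Matrix (Fin d) (Fin d) ℂ} (hA : A.PosSemidef) : gval f A = hval f A := by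
  have := g_wd hrange hadd hunit hA.isHermitian le_rfl (by simpa using hA)
  simp only [zero_smul, add_zero] at this
  linarith [this]

include hrange hadd hunit in
lemma g_add {A B : Matrix (Fin d) (Fin d) ℂ} (hA : A.IsHermitian) (hB : B.IsHermitian) :
    gval f (A + B) = gval f A + gval f B := by
  have hpA := bnd_add_psd hA
  have hpB := bnd_add_psd hB
  have hsum : ((A + B) + (bnd A + bnd B) • (1 : Matrix (Fin d) (Fin d) ℂ))
      = (A + bnd A • (1 : Matrix (Fin d) (Fin d) ℂ)) + (B + bnd B • 1) := by
    rw [add_smul]; abel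
  have hc0 : (0:ℝ) ≤ bnd A + bnd B := by linarith [bnd_pos A, bnd_pos B]
  have hp : ((A + B) + (bnd A + bnd B) • (1 : Matrix (Fin d) (Fin d) ℂ)).PosSemidef := by
    rw [hsum]; exact hpA.add hpB
  have h1 := g_wd hrange hadd hunit (hA.add hB) hc0 hp
  rw [hsum, h_add hrange hadd hpA hpB,
    g_wd hrange hadd hunit hA (bnd_pos A).le hpA,
    g_wd hrange hadd hunit hB (bnd_pos B).le hpB] at h1
  linarith [h1]

include hrange hadd hunit in
lemma g_zero : gval f (0 : Matrix (Fin d) (Fin d) ℂ) = 0 := by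
  rw [g_psd hrange hadd hunit Matrix.PosSemidef.zero, h_zero hrange hadd]

include hrange hadd hunit in
lemma g_neg {A : Matrix (Fin d) (Fin d) ℂ} (hA : A.IsHermitian) :
    gval f (-A) = - gval f A := by
  set b : ℝ := bnd A with hb
  have hb0 : 0 < b := bnd_pos A
  have hp1 : (A + b • (1 : Matrix (Fin d) (Fin d) ℂ)).PosSemidef := bnd_add_psd hA
  have hp2 : (-A + b • (1 : Matrix (Fin d) (Fin d) ℂ)).PosSemidef := by
    have : -A + b • (1 : Matrix (Fin d) (Fin d) ℂ) = b • 1 - A := by abel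
    rw [this]; exact bnd_sub_psd hA
  have h1 := g_wd hrange hadd hunit hA hb0.le hp1
  have h2 := g_wd hrange hadd hunit hA.neg hb0.le hp2
  have hsum : (A + b • (1:Matrix (Fin d) (Fin d) ℂ)) + (-A + b • 1) = (b + b) • 1 := by
    rw [add_smul]; abel
  have h3 : hval f ((A + b • (1:Matrix (Fin d) (Fin d) ℂ)) + (-A + b • 1)) = b + b := by
    rw [hsum, h_smul_one hrange hadd hunit (by linarith)]
  rw [h_add hrange hadd hp1 hp2, h1, h2] at h3
  linarith [h3]

include hrange hadd hunit in
lemma g_smul_nonneg {A : Matrix (Fin d) (Fin d) ℂ} (hA : A.IsHermitian) {t : ℝ} (ht : 0 ≤ t) :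
    gval f (t • A) = t * gval f A := by
  · set b : ℝ := bnd A with hb
    have hb0 : 0 < b := bnd_pos A
    have hp1 : (A + b • (1 : Matrix (Fin d) (Fin d) ℂ)).PosSemidef := bnd_add_psd hA
    have hkey : t • A + (t * b) • (1 : Matrix (Fin d) (Fin d) ℂ)
        = t • (A + b • 1) := by
      rw [smul_add, smul_smul]
    have hp2 : (t • A + (t * b) • (1 : Matrix (Fin d) (Fin d) ℂ)).PosSemidef := by
      rw [hkey]; exact psd_smul hp1 ht
    have h1 := g_wd hrange hadd hunit (herm_smul_real hA t) (by positivity) hp2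
    rw [hkey, h_smul hrange hadd hp1 ht,
      g_wd hrange hadd hunit hA hb0.le hp1] at h1
    have : t * (gval f A + b) = t * gval f A + t * b := by ring
    rw [this] at h1
    linarith [h1]

include hrange hadd hunit in
lemma g_smul {A : Matrix (Fin d) (Fin d) ℂ} (hA : A.IsHermitian) (t : ℝ) :
    gval f (t • A) = t * gval f A := by
  rcases le_total 0 t with ht | ht
  · exact g_smul_nonneg hrange hadd hunit hA ht
  · have h1 : gval f ((-t) • A) = (-t) * gval f A :=
      g_smul_nonneg hrange hadd hunit hA (by linarith)
    have h2 : t • A = -((-t) • A) := by rw [neg_smul, neg_neg]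
    rw [h2, g_neg hrange hadd hunit (herm_smul_real hA (-t)), h1]
    ring

end GPart2

section Proj

variable {d : ℕ}

lemma vecMulVec_psd (v : Fin d → ℂ) : (vecMulVec v (star v)).PosSemidef := by
  have : vecMulVec v (star v) = replicateCol (Fin 1) v * (replicateCol (Fin 1) v)ᴴ := by
    rw [conjTranspose_replicateCol]; exact vecMulVec_eq (ι := Fin 1) v (star v)
  rw [this]
  exact posSemidef_self_mul_conjTranspose _

lemma vecMulVec_mul_self {v : Fin d → ℂ} (hv : star v ⬝ᵥ v = 1) :
    vecMulVec v (star v) * vecMulVec v (star v) = vecMulVec v (star v) := by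
  ext a b
  simp only [Matrix.mul_apply, vecMulVec_apply, Pi.star_apply]
  have : ∑ c, v a * star (v c) * (v c * star (v b))
      = (v a * star (v b)) * ∑ c, star (v c) * v c := by
    rw [Finset.mul_sum]; congr 1; funext c; ring
  rw [this]
  have hv' : ∑ c, star (v c) * v c = 1 := hv
  rw [hv', mul_one]

lemma unit_proj_isEffect {v : Fin d → ℂ} (hv : star v ⬝ᵥ v = 1) :
    IsEffect (vecMulVec v (star v)) := by
  set P := vecMulVec v (star v) with hP
  have hpsd : P.PosSemidef := vecMulVec_psd v
  refine ⟨hpsd.isHermitian, hpsd, ?_⟩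
  have hherm : ((1 : Matrix (Fin d) (Fin d) ℂ) - P).IsHermitian := by
    show ((1 : Matrix (Fin d) (Fin d) ℂ) - P)ᴴ = 1 - P
    rw [conjTranspose_sub, conjTranspose_one, hpsd.isHermitian]
  have hidem : ((1 : Matrix (Fin d) (Fin d) ℂ) - P) * (1 - P) = 1 - P := by
    rw [Matrix.mul_sub, Matrix.mul_one, Matrix.sub_mul, Matrix.one_mul,
      vecMulVec_mul_self hv]
    abel
  have : (1 : Matrix (Fin d) (Fin d) ℂ) - P
      = ((1 : Matrix (Fin d) (Fin d) ℂ) - P)ᴴ * (1 - P) := by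
    rw [hherm, hidem]
  rw [this]
  exact posSemidef_conjTranspose_mul_self _

lemma trace_mul_vecMulVec (σ : Matrix (Fin d) (Fin d) ℂ) (v : Fin d → ℂ) :
    (σ * vecMulVec v (star v)).trace = star v ⬝ᵥ σ *ᵥ v := by
  simp only [Matrix.trace, Matrix.diag_apply, Matrix.mul_apply, vecMulVec_apply,
    dotProduct, Matrix.mulVec, Pi.star_apply]
  congr 1
  funext a
  rw [Finset.mul_sum]
  congr 1
  funext b
  ring

end Proj

end EffectAux

open EffectAux in
/-- An additive map from effects to `[0,1]` with `f(I) = 1`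
extends to a positive (real-)linear functional on matrices and is given by
`f(E) = Tr[ρE]` for a unique density matrix `ρ`. -/
theorem additive_effect_functional_extends
    {d : ℕ} (f : Matrix (Fin d) (Fin d) ℂ → ℝ)
    (hrange : ∀ E, IsEffect E → 0 ≤ f E ∧ f E ≤ 1)
    (hadd : ∀ E₁ E₂, IsEffect E₁ → IsEffect E₂ → IsEffect (E₁ + E₂) →
      f (E₁ + E₂) = f E₁ + f E₂)
    (hunit : f 1 = 1) :
    (∃ L : Matrix (Fin d) (Fin d) ℂ →ₗ[ℝ] ℝ,
        (∀ E, IsEffect E → L E = f E) ∧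
        (∀ M : Matrix (Fin d) (Fin d) ℂ, M.PosSemidef → 0 ≤ L M)) ∧
    ∃! ρ : Matrix (Fin d) (Fin d) ℂ,
      ρ.PosSemidef ∧ ρ.trace = 1 ∧
      ∀ E, IsEffect E → (ρ * E).trace = ((f E : ℝ) : ℂ) := by
  classical
  -- the real-linear extension as a bare function
  set Lfun : Matrix (Fin d) (Fin d) ℂ → ℝ :=
    fun M => gval f ((2⁻¹ : ℝ) • (M + Mᴴ)) with hLfun
  have hermp : ∀ M : Matrix (Fin d) (Fin d) ℂ, ((2⁻¹ : ℝ) • (M + Mᴴ)).IsHermitian := by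
    intro M
    refine herm_smul_real ?_ _
    show (M + Mᴴ)ᴴ = M + Mᴴ
    rw [conjTranspose_add, conjTranspose_conjTranspose, add_comm]
  have hLadd : ∀ M N, Lfun (M + N) = Lfun M + Lfun N := by
    intro M N
    have hsplit : (2⁻¹:ℝ) • (M + N + (M + N)ᴴ)
        = (2⁻¹:ℝ) • (M + Mᴴ) + (2⁻¹:ℝ) • (N + Nᴴ) := by
      rw [conjTranspose_add, ← smul_add]
      congr 1
      abel
    show gval f _ = gval f _ + gval f _
    rw [hsplit]
    exact g_add hrange hadd hunit (hermp M) (hermp N)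
  have hLsmul : ∀ (t : ℝ) M, Lfun (t • M) = t * Lfun M := by
    intro t M
    have hsplit : (2⁻¹:ℝ) • (t • M + (t • M)ᴴ) = t • ((2⁻¹:ℝ) • (M + Mᴴ)) := by
      rw [conjTranspose_smul, star_trivial, ← smul_add, smul_comm]
    show gval f _ = t * gval f _
    rw [hsplit]
    exact g_smul hrange hadd hunit (hermp M) t
  have hLherm : ∀ M : Matrix (Fin d) (Fin d) ℂ, M.IsHermitian → Lfun M = gval f M := by
    intro M hM
    show gval f _ = gval f M
    congr 1
    have : Mᴴ = M := hM
    rw [this, ← two_smul ℝ M, smul_smul]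
    norm_num
  have hLeff : ∀ E, IsEffect E → Lfun E = f E := by
    intro E hE
    rw [hLherm E hE.1, g_psd hrange hadd hunit hE.2.1, h_effect hrange hadd hE]
  have hLpos : ∀ M : Matrix (Fin d) (Fin d) ℂ, M.PosSemidef → 0 ≤ Lfun M := by
    intro M hM
    rw [hLherm M hM.isHermitian, g_psd hrange hadd hunit hM]
    exact h_nonneg hrange hadd hM
  have hLiherm : ∀ M : Matrix (Fin d) (Fin d) ℂ, M.IsHermitian →
      Lfun (Complex.I • M) = 0 := by
    intro M hM
    have hsplit : (2⁻¹:ℝ) • (Complex.I • M + (Complex.I • M)ᴴ) = 0 := by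
      rw [conjTranspose_smul]
      have hM' : Mᴴ = M := hM
      rw [hM']
      have : star Complex.I = -Complex.I := by simp [Complex.star_def, Complex.conj_I]
      rw [this, neg_smul]
      simp
    show gval f _ = 0
    rw [hsplit]
    exact g_zero hrange hadd hunit
  have hLconjT : ∀ M : Matrix (Fin d) (Fin d) ℂ, Lfun Mᴴ = Lfun M := by
    intro M
    show gval f _ = gval f _
    congr 1
    rw [conjTranspose_conjTranspose, add_comm]
  have hLneg : ∀ M : Matrix (Fin d) (Fin d) ℂ, Lfun (-M) = - Lfun M := by
    intro M
    have hsplit : (2⁻¹:ℝ) • (-M + (-M)ᴴ) = -((2⁻¹:ℝ) • (M + Mᴴ)) := by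
      rw [conjTranspose_neg, ← smul_neg]
      congr 1
      abel
    show gval f _ = - gval f _
    rw [hsplit, show -((2⁻¹:ℝ) • (M + Mᴴ)) = (-1 : ℝ) • ((2⁻¹:ℝ) • (M + Mᴴ)) by
      rw [neg_one_smul], g_smul hrange hadd hunit (hermp M) (-1)]
    show (-1 : ℝ) * gval f _ = _
    ring
  have hLiconj : ∀ M : Matrix (Fin d) (Fin d) ℂ,
      Lfun (Complex.I • Mᴴ) = - Lfun (Complex.I • M) := by
    intro M
    have e1 : Lfun (Complex.I • Mᴴ) = Lfun (-(Complex.I • M)) := by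
      show gval f _ = gval f _
      congr 1
      rw [conjTranspose_neg, conjTranspose_smul, conjTranspose_smul,
        conjTranspose_conjTranspose]
      have : star Complex.I = -Complex.I := by simp [Complex.star_def, Complex.conj_I]
      rw [this]
      simp only [neg_smul]
      abel
    rw [e1, hLneg]
  -- the complex-valued functional
  set phi : Matrix (Fin d) (Fin d) ℂ → ℂ :=
    fun M => (Lfun M : ℂ) - Complex.I * (Lfun (Complex.I • M) : ℂ) with hphi
  have hphiadd : ∀ M N, phi (M + N) = phi M + phi N := by
    intro M N
    show ((Lfun (M+N) : ℝ) : ℂ) - _ = _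
    rw [hLadd M N, smul_add, hLadd]
    push_cast
    ring
  have hphihermval : ∀ M : Matrix (Fin d) (Fin d) ℂ, M.IsHermitian →
      phi M = ((Lfun M : ℝ) : ℂ) := by
    intro M hM
    show ((Lfun M : ℝ) : ℂ) - Complex.I * ((Lfun (Complex.I • M) : ℝ) : ℂ) = _
    rw [hLiherm M hM]
    push_cast
    ring
  have hcoe_smul : ∀ (t : ℝ) (M : Matrix (Fin d) (Fin d) ℂ), ((t:ℂ) • M) = t • M := by
    intro t M
    ext i j
    simp [Complex.real_smul]
  have hphismulR : ∀ (t : ℝ) M, phi (t • M) = (t : ℂ) * phi M := by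
    intro t M
    show ((Lfun (t • M) : ℝ) : ℂ) - Complex.I * ((Lfun (Complex.I • (t • M)) : ℝ) : ℂ) = _
    rw [hLsmul t M, smul_comm, hLsmul t]
    push_cast
    ring
  have hphiI : ∀ M, phi (Complex.I • M) = Complex.I * phi M := by
    intro M
    have hII : Complex.I • (Complex.I • M) = -M := by
      rw [smul_smul, Complex.I_mul_I, neg_one_smul]
    show ((Lfun (Complex.I • M) : ℝ) : ℂ)
        - Complex.I * ((Lfun (Complex.I • (Complex.I • M)) : ℝ) : ℂ) = _
    rw [hII, hLneg]
    show _ = Complex.I * (((Lfun M : ℝ) : ℂ) - Complex.I * ((Lfun (Complex.I • M) : ℝ) : ℂ))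
    push_cast
    have : Complex.I * Complex.I = -1 := Complex.I_mul_I
    ring_nf
    rw [Complex.I_sq]
    ring
  have hphismul : ∀ (z : ℂ) M, phi (z • M) = z * phi M := by
    intro z M
    have hz : z • M = (z.re : ℝ) • M + (z.im : ℝ) • (Complex.I • M) := by
      rw [← hcoe_smul, ← hcoe_smul, smul_smul, ← add_smul]
      congr 1
      exact (Complex.re_add_im z).symm
    rw [hz, hphiadd, hphismulR, hphismulR, hphiI]
    rw [show (z.re : ℂ) * phi M + (z.im : ℂ) * (Complex.I * phi M)
        = ((z.re : ℂ) + z.im * Complex.I) * phi M by ring, Complex.re_add_im]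
  have hphiconj : ∀ M, star (phi M) = phi Mᴴ := by
    intro M
    show star (((Lfun M : ℝ) : ℂ) - Complex.I * ((Lfun (Complex.I • M) : ℝ) : ℂ))
        = ((Lfun Mᴴ : ℝ) : ℂ) - Complex.I * ((Lfun (Complex.I • Mᴴ) : ℝ) : ℂ)
    rw [hLconjT, hLiconj]
    simp only [star_sub, star_mul', Complex.star_def, Complex.conj_ofReal, Complex.conj_I]
    push_cast
    ring
  -- the density matrix
  set rho : Matrix (Fin d) (Fin d) ℂ :=
    Matrix.of (fun j k => phi (Matrix.single k j 1)) with hrho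
  -- bundle phi additivity
  set phiA : Matrix (Fin d) (Fin d) ℂ →+ ℂ := AddMonoidHom.mk' phi hphiadd with hphiA
  have htrace : ∀ M : Matrix (Fin d) (Fin d) ℂ, (rho * M).trace = phi M := by
    intro M
    have hdecomp : M = ∑ i : Fin d, ∑ j : Fin d, Matrix.single i j (M i j) :=
      matrix_eq_sum_single M
    have hphiM : phi M = ∑ i : Fin d, ∑ j : Fin d, M i j * phi (Matrix.single i j 1) := by
      conv_lhs => rw [hdecomp]
      show phiA _ = _
      rw [map_sum]
      congr 1
      funext i
      rw [map_sum]
      congr 1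
      funext j
      show phi _ = _
      have : Matrix.single i j (M i j) = (M i j) • Matrix.single i j (1:ℂ) := by
        rw [smul_single, smul_eq_mul, mul_one]
      rw [this, hphismul]
    rw [hphiM]
    simp only [Matrix.trace, Matrix.diag_apply, Matrix.mul_apply, hrho, Matrix.of_apply]
    rw [Finset.sum_comm]
    congr 1
    funext i
    congr 1
    funext j
    ring
  have hrho_herm : rho.IsHermitian := by
    show rhoᴴ = rho
    ext j k
    rw [conjTranspose_apply]
    show star (phi (Matrix.single j k 1)) = phi (Matrix.single k j 1)
    rw [hphiconj]
    congr 1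
    ext a b
    simp only [conjTranspose_apply, Matrix.single, Matrix.of_apply]
    by_cases h1 : j = b <;> by_cases h2 : k = a <;> simp [h1, h2, and_comm]
  have hrho_psd : rho.PosSemidef := by
    refine Matrix.PosSemidef.of_dotProduct_mulVec_nonneg hrho_herm fun x => ?_
    have h1 : star x ⬝ᵥ rho *ᵥ x = (rho * vecMulVec x (star x)).trace :=
      (trace_mul_vecMulVec rho x).symm
    rw [h1, htrace, hphihermval _ (vecMulVec_psd x).isHermitian]
    rw [Complex.zero_le_real]
    exact hLpos _ (vecMulVec_psd x)
  have hrho_tr : rho.trace = 1 := by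
    have : rho.trace = (rho * 1).trace := by rw [Matrix.mul_one]
    rw [this, htrace, hphihermval _ isHermitian_one, hLeff 1 isEffect_one, hunit]
    norm_num
  have hrho_form : ∀ E, IsEffect E → (rho * E).trace = ((f E : ℝ) : ℂ) := by
    intro E hE
    rw [htrace, hphihermval _ hE.1, hLeff E hE]
  refine ⟨⟨⟨⟨Lfun, fun M N => hLadd M N⟩, fun t M => by simpa using hLsmul t M⟩,
      fun E hE => hLeff E hE, fun M hM => hLpos M hM⟩,
      rho, ⟨hrho_psd, hrho_tr, hrho_form⟩, ?_⟩
  -- uniqueness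
  intro S hS
  obtain ⟨hS_psd, hS_tr, hS_form⟩ := hS
  set σ : Matrix (Fin d) (Fin d) ℂ := S - rho with hσ
  have hdiff : ∀ v : Fin d → ℂ, star v ⬝ᵥ v = 1 → star v ⬝ᵥ σ *ᵥ v = 0 := by
    intro v hv
    have hEff := unit_proj_isEffect hv
    have h1 : (σ * vecMulVec v (star v)).trace = 0 := by
      rw [hσ, Matrix.sub_mul, trace_sub, hS_form _ hEff, hrho_form _ hEff, sub_self]
    rw [← trace_mul_vecMulVec, h1]
  have hB1 : ∀ (j k : Fin d) (c c' : ℂ),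
      star ((Pi.single j c : Fin d → ℂ)) ⬝ᵥ σ *ᵥ ((Pi.single k c' : Fin d → ℂ)) = star c * σ j k * c' := by
    intro j k c c'
    rw [← Pi.single_star, single_dotProduct, Matrix.mulVec_single]
    simp only [Pi.smul_apply, op_smul_eq_mul, Matrix.col_apply]
    ring
  have hdiag : ∀ j : Fin d, σ j j = 0 := by
    intro j
    have hu : star ((Pi.single j 1 : Fin d → ℂ)) ⬝ᵥ ((Pi.single j 1 : Fin d → ℂ)) = 1 := by
      rw [← Pi.single_star, single_dotProduct]
      simp
    have := hdiff _ hu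
    rw [hB1 j j 1 1] at this
    simpa using this
  have hexp : ∀ (j k : Fin d) (c c' : ℂ), j ≠ k →
      star ((Pi.single j c + Pi.single k c' : Fin d → ℂ)) ⬝ᵥ σ *ᵥ ((Pi.single j c + Pi.single k c' : Fin d → ℂ))
        = star c * σ j j * c + star c * σ j k * c' + star c' * σ k j * c
          + star c' * σ k k * c' := by
    intro j k c c' hjk
    rw [star_add, Matrix.mulVec_add, dotProduct_add, add_dotProduct,
      add_dotProduct, hB1, hB1, hB1, hB1]
    ring
  have hcross : ∀ (j k : Fin d) (c c' : ℂ), j ≠ k → star c * c + star c' * c' = 1 →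
      star c * σ j k * c' + star c' * σ k j * c = 0 := by
    intro j k c c' hjk hcc
    have hu : star ((Pi.single j c + Pi.single k c' : Fin d → ℂ)) ⬝ᵥ ((Pi.single j c + Pi.single k c' : Fin d → ℂ)) = 1 := by
      rw [star_add, dotProduct_add, add_dotProduct, add_dotProduct,
        ← Pi.single_star, ← Pi.single_star, single_dotProduct,
        single_dotProduct, single_dotProduct, single_dotProduct]
      rw [Pi.single_eq_same, Pi.single_eq_same, Pi.single_eq_of_ne hjk,
        Pi.single_eq_of_ne (Ne.symm hjk)]
      simpa using hcc
    have h0 := hdiff _ hu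
    rw [hexp j k c c' hjk, hdiag j, hdiag k] at h0
    linear_combination h0
  have hoff : ∀ (j k : Fin d), j ≠ k → σ j k = 0 := by
    intro j k hjk
    set a : ℝ := (Real.sqrt 2)⁻¹ with ha
    set ca : ℂ := (a : ℂ) with hca'
    have hstar : star ca = ca := by
      rw [hca']; exact Complex.conj_ofReal a
    have haa : a * a = 2⁻¹ := by
      rw [ha, ← mul_inv]
      rw [Real.mul_self_sqrt (by norm_num : (0:ℝ) ≤ 2)]
    have hcaca : ca * ca = (2⁻¹ : ℂ) := by
      rw [hca', ← Complex.ofReal_mul, haa]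
      norm_num
    have hI : star Complex.I = -Complex.I := by
      simp [Complex.star_def, Complex.conj_I]
    have hstarI : star (ca * Complex.I) = - (ca * Complex.I) := by
      rw [star_mul', hstar, hI]
      ring
    have eq1 := hcross j k ca ca hjk (by rw [hstar]; linear_combination 2 * hcaca)
    have eq2 := hcross j k ca (ca * Complex.I) hjk (by
      rw [hstar, hstarI]
      have : Complex.I * Complex.I = -1 := Complex.I_mul_I
      linear_combination (1 - Complex.I * Complex.I) * hcaca - (2⁻¹ : ℂ) * this)
    rw [hstar] at eq1
    rw [hstar, hstarI] at eq2
    have e1' : σ j k + σ k j = 0 := by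
      have h2 : (ca * ca) * (σ j k + σ k j) = 0 := by linear_combination eq1
      rw [hcaca] at h2
      linear_combination 2 * h2
    have e2' : σ j k - σ k j = 0 := by
      have h2 : (ca * ca) * (Complex.I * (σ j k - σ k j)) = 0 := by linear_combination eq2
      rw [hcaca] at h2
      have : Complex.I * Complex.I = -1 := Complex.I_mul_I
      linear_combination (-2 * Complex.I) * h2 + (σ j k - σ k j) * this
    linear_combination (2⁻¹ : ℂ) * e1' + (2⁻¹ : ℂ) * e2'
  have hσ0 : σ = 0 := by
    ext j k
    by_cases h : j = k
    · subst h; simpa using hdiag j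
    · simpa using hoff j k h
  have := sub_eq_zero.mp hσ0
  exact this
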